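/- arXiv:0908.1503 — 2 statements merged into one kernel-verified Lean document; each statement's English description precedes it below -/
import Mathlib

section
/- Let C be an algebraically closed field complete with respect to a non-archimedean absolute value, and q a power of the characteristic of C (so x ↦ x^q is additive). Let f = Σᵢ fᵢ tⁱ be an element of the Tate algebra C{t} (i.e. |fᵢ| → 0). Then there exists g = Σᵢ gᵢ tⁱ ∈ C{t} such that gᵢ^q − gᵢ = fᵢ for all i, i.e. τ(g) − g = f where τ acts coefficientwise by the q-th power map. -/
/-!
Take `g i` to be a root of `X ^ q - X - f i`. For the coefficients with `v (f i) < 1` the root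
must be chosen well: the roots multiply to `± f i`, so one of them, `r`, has `v r < 1`; then
`v (r ^ q) < v r` and the ultrametric inequality give `v r = v (r ^ q - r) = v (f i)`.
Hence `v (g i) = v (f i)` for all large `i`.
-/

open Filter Polynomial

section

variable {K : Type*} [Field K] (v : AbsoluteValue K ℝ)

lemma Polynomial.Splits.exists_mem_roots_absoluteValue_lt_one {P : K[X]} (hP : P.Splits)
    (hm : P.Monic) (h0 : v (P.coeff 0) < 1) : ∃ r ∈ P.roots, v r < 1 := by
  by_contra! hroots
  have hprod : v (P.coeff 0) = (P.roots.map v).prod := by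
    rw [hP.coeff_zero_eq_prod_roots_of_monic hm, v.map_mul, v.map_pow, v.map_neg, v.map_one,
      one_pow, one_mul, map_multiset_prod]
  refine h0.not_ge (hprod ▸ Multiset.one_le_prod fun x hx => ?_)
  obtain ⟨r, hr, rfl⟩ := Multiset.mem_map.mp hx
  exact hroots r hr

variable {v}

lemma AbsoluteValue.map_pow_sub_self_of_lt_one (hv : IsNonarchimedean v) {q : ℕ} (hq : 1 < q)
    {r : K} (hr : v r < 1) : v (r ^ q - r) = v r := by
  rcases eq_or_ne r 0 with rfl | hr0
  · simp [zero_pow (by omega : q ≠ 0)]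
  have hpow : v (r ^ q) < v (-r) := by
    rw [map_pow, map_neg_eq_map]
    exact pow_lt_self_of_lt_one₀ (v.pos hr0) hr hq
  rw [sub_eq_neg_add, IsNonarchimedean.add_eq_left_of_lt hv hpow, map_neg_eq_map]

end

section

variable {K : Type*} [Field K] {q : ℕ}

lemma Polynomial.degree_X_add_C_lt (hq : 1 < q) (c : K) : (X + C c : K[X]).degree < q := by
  rw [degree_X_add_C]
  exact_mod_cast hq

lemma Polynomial.monic_X_pow_sub_X_sub_C (hq : 1 < q) (c : K) : (X ^ q - X - C c : K[X]).Monic := by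
  rw [sub_sub]
  exact monic_X_pow_sub (degree_X_add_C_lt hq c)

lemma Polynomial.degree_X_pow_sub_X_sub_C (hq : 1 < q) (c : K) : (X ^ q - X - C c : K[X]).degree = q := by
  rw [sub_sub, degree_sub_eq_left_of_degree_lt (degree_X_pow (R := K) q ▸ degree_X_add_C_lt hq c),
    degree_X_pow]

lemma Polynomial.isRoot_X_pow_sub_X_sub_C {c r : K} : (X ^ q - X - C c : K[X]).IsRoot r ↔ r ^ q - r = c := by
  rw [IsRoot, eval_sub, eval_sub, eval_pow, eval_X, eval_C, sub_eq_zero]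

variable [IsAlgClosed K]

lemma IsAlgClosed.exists_pow_sub_self_eq (hq : 1 < q) (c : K) : ∃ g : K, g ^ q - g = c := by
  obtain ⟨r, hr⟩ := IsAlgClosed.exists_root (X ^ q - X - C c : K[X])
    (by rw [degree_X_pow_sub_X_sub_C hq]; exact_mod_cast (by omega : q ≠ 0))
  exact ⟨r, isRoot_X_pow_sub_X_sub_C.mp hr⟩

lemma IsAlgClosed.exists_pow_sub_self_eq_of_lt_one {v : AbsoluteValue K ℝ}
    (hv : IsNonarchimedean v) (hq : 1 < q) {c : K} (hc : v c < 1) :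
    ∃ g : K, g ^ q - g = c ∧ v g = v c := by
  have hcoeff : (X ^ q - X - C c : K[X]).coeff 0 = -c := by
    simp only [coeff_sub, coeff_X_pow, coeff_X_zero, coeff_C_zero, if_neg (by omega : 0 ≠ q)]
    ring
  obtain ⟨r, hr, hvr⟩ := (IsAlgClosed.splits _).exists_mem_roots_absoluteValue_lt_one v
    (monic_X_pow_sub_X_sub_C hq c) (by rwa [hcoeff, map_neg_eq_map])
  rw [mem_roots (monic_X_pow_sub_X_sub_C hq c).ne_zero, isRoot_X_pow_sub_X_sub_C] at hr
  exact ⟨r, hr, hr ▸ (v.map_pow_sub_self_of_lt_one hv hq hvr).symm⟩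

end

theorem artinSchreier_solvable_in_tateAlgebra_general
    (C : Type*) [Field C] [IsAlgClosed C]
    (v : AbsoluteValue C ℝ)
    (hna : ∀ x y : C, v (x + y) ≤ max (v x) (v y))
    (p : ℕ) [Fact p.Prime]
    (n q : ℕ) (hn : 1 ≤ n) (hq : q = p ^ n)
    (f : ℕ → C) (hf : Tendsto (fun i => v (f i)) atTop (nhds 0)) :
    ∃ g : ℕ → C, Tendsto (fun i => v (g i)) atTop (nhds 0) ∧
      ∀ i, g i ^ q - g i = f i := by
  have hq1 : 1 < q := hq ▸ Nat.one_lt_pow (by omega) (Fact.out : p.Prime).one_lt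
  have hsol (c : C) : ∃ g : C, g ^ q - g = c ∧ (v c < 1 → v g = v c) := by
    by_cases hc : v c < 1
    · obtain ⟨g, hg, hvg⟩ := IsAlgClosed.exists_pow_sub_self_eq_of_lt_one hna hq1 hc
      exact ⟨g, hg, fun _ => hvg⟩
    · obtain ⟨g, hg⟩ := IsAlgClosed.exists_pow_sub_self_eq hq1 c
      exact ⟨g, hg, (absurd · hc)⟩
  choose g hg hvg using fun i => hsol (f i)
  refine ⟨g, hf.congr' ?_, hg⟩
  filter_upwards [hf.eventually_lt_const one_pos] with i hi
  exact (hvg i hi).symm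

/-- Let `C` be an algebraically closed field with a non-archimedean absolute
value, of characteristic `p`, and `q = pⁿ` a power of `p`.  For every element
`f = Σ fᵢ tⁱ` of the Tate algebra `C{t}` (i.e. `|fᵢ| → 0`) there is `g = Σ gᵢ tⁱ ∈ C{t}`
with `gᵢ^q − gᵢ = fᵢ` for all `i`, i.e. `τ(g) − g = f` coefficientwise. -/
theorem artinSchreier_solvable_in_tateAlgebra
    (C : Type*) [Field C] [IsAlgClosed C]
    (v : AbsoluteValue C ℝ)
    (hna : ∀ x y : C, v (x + y) ≤ max (v x) (v y))
    (p : ℕ) [Fact p.Prime] [CharP C p]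
    (n q : ℕ) (hn : 1 ≤ n) (hq : q = p ^ n)
    (f : ℕ → C) (hf : Tendsto (fun i => v (f i)) atTop (nhds 0)) :
    ∃ g : ℕ → C, Tendsto (fun i => v (g i)) atTop (nhds 0) ∧
      ∀ i, g i ^ q - g i = f i :=
  artinSchreier_solvable_in_tateAlgebra_general C v hna p n q hn hq f hf
end

section
/- Let C be a complete algebraically closed non-archimedean field of characteristic p, q a power of p, and consider the 'trivial' module C{t} over itself with the semilinear operator τ (coefficientwise q-power map). Then every extension of (C{t}, τ) by (C{t}, τ) in the category of C{t}-modules with τ-semilinear endomorphism splits: concretely, for every f ∈ C{t} there exists g ∈ C{t} with f = τ(g) − g, and consequently any rank-2 module D = C{t}e₁ ⊕ C{t}e₂ with τe₁ = e₁, τe₂ = e₂ + f e₁ admits a τ-invariant element of the form e₂ + g e₁. -/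
/-!
Coefficientwise, `τ g - g = f` asks for roots of `X ^ q - X - a` with `a` the coefficients of `f`;
these exist as `C` is algebraically closed. When `‖a‖ < 1` the roots multiply to `± a`, so one of
them has `‖x‖ < 1`; then `‖x ^ q‖ < ‖x‖` and the ultrametric inequality gives `‖x‖ = ‖a‖`. Choosing
such roots for the coefficients of `f`, which eventually have norm `< 1`, keeps `g` in `C{t}`.
-/

open Filter PowerSeries

section NormedField

variable {K : Type*} [NormedField K]

open Polynomial in
lemma Polynomial.Monic.exists_mem_roots_norm_lt_one {P : K[X]} (hP : P.Monic) (hs : P.Splits)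
    (h0 : ‖P.coeff 0‖ < 1) : ∃ r ∈ P.roots, ‖r‖ < 1 := by
  by_contra! h
  have hprod : ‖P.coeff 0‖₊ = (P.roots.map fun r => ‖r‖₊).prod := by
    rw [hs.coeff_zero_eq_prod_roots_of_monic hP, nnnorm_mul, nnnorm_pow, nnnorm_neg, nnnorm_one,
      one_pow, one_mul]
    exact map_multiset_prod (nnnormHom : K →*₀ NNReal) P.roots
  have : 1 ≤ ‖P.coeff 0‖₊ := hprod ▸ Multiset.one_le_prod_of_one_le fun x hx => by
    obtain ⟨r, hr, rfl⟩ := Multiset.mem_map.1 hx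
    exact_mod_cast h r hr
  exact h0.not_ge (by exact_mod_cast this)

variable [IsUltrametricDist K]

lemma norm_pow_sub_self_of_norm_lt_one {x : K} (hx : ‖x‖ < 1) {q : ℕ} (hq : 2 ≤ q) :
    ‖x ^ q - x‖ = ‖x‖ := by
  rcases eq_or_ne x 0 with rfl | hx0
  · simp [zero_pow (by omega : q ≠ 0)]
  have hlt : ‖x ^ q‖ < ‖-x‖ := by
    rw [norm_pow, norm_neg]
    calc ‖x‖ ^ q ≤ ‖x‖ ^ 2 := pow_le_pow_of_le_one (norm_nonneg x) hx.le hq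
    _ < ‖x‖ := by nlinarith [norm_pos_iff.2 hx0]
  rw [sub_eq_add_neg, IsUltrametricDist.norm_add_eq_max_of_norm_ne_norm hlt.ne,
    max_eq_right hlt.le, norm_neg]

open Polynomial in
lemma exists_pow_sub_self_eq_and_norm_eq [IsAlgClosed K] {q : ℕ} (hq : 2 ≤ q) (a : K) :
    ∃ x : K, x ^ q - x = a ∧ (‖a‖ < 1 → ‖x‖ = ‖a‖) := by
  set P : K[X] := Polynomial.X ^ q - (Polynomial.X + Polynomial.C a)
  have hdeg : (Polynomial.X + Polynomial.C a).degree < (q : WithBot ℕ) := by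
    rw [degree_X_add_C]; exact_mod_cast (by omega : 1 < q)
  have hroot {x : K} (hx : P.IsRoot x) : x ^ q - x = a := by
    simp only [P, IsRoot, eval_sub, eval_add, eval_pow, eval_X, eval_C] at hx
    linear_combination hx
  by_cases ha : ‖a‖ < 1
  · have hP0 : ‖P.coeff 0‖ < 1 := by
      simpa [P, Polynomial.coeff_zero_eq_eval_zero, zero_pow (by omega : q ≠ 0)] using ha
    obtain ⟨x, hxP, hx⟩ :=
      (monic_X_pow_sub hdeg).exists_mem_roots_norm_lt_one (IsAlgClosed.splits P) hP0
    have hxa := hroot (isRoot_of_mem_roots hxP)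
    exact ⟨x, hxa, fun _ => hxa ▸ (norm_pow_sub_self_of_norm_lt_one hx hq).symm⟩
  · obtain ⟨x, hx⟩ := IsAlgClosed.exists_root P (by
      rw [degree_sub_eq_left_of_degree_lt (by rwa [degree_X_pow]), degree_X_pow]
      exact_mod_cast (by omega : q ≠ 0))
    exact ⟨x, hroot hx, fun h => absurd h ha⟩

lemma PowerSeries.exists_map_sub_self_eq [IsAlgClosed K] {q : ℕ} (hq : 2 ≤ q) (φ : K →+* K)
    (hφ : ∀ x, φ x = x ^ q) {f : PowerSeries K}
    (hf : Tendsto (fun i => ‖coeff i f‖) atTop (nhds 0)) :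
    ∃ g : PowerSeries K, Tendsto (fun i => ‖coeff i g‖) atTop (nhds 0) ∧ f = map φ g - g := by
  choose x hx hnorm using exists_pow_sub_self_eq_and_norm_eq (K := K) hq
  refine ⟨mk fun i => x (coeff i f), hf.congr' ?_, ?_⟩
  · filter_upwards [hf.eventually (gt_mem_nhds one_pos)] with i hi
    simp [hnorm _ hi]
  · ext i
    simp [hφ, hx]

end NormedField

theorem trivial_tate_extension_splits_general
    (C : Type*) [NontriviallyNormedField C] [IsAlgClosed C]
    (hna : ∀ x y : C, ‖x + y‖ ≤ max ‖x‖ ‖y‖)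
    (p : ℕ) [Fact p.Prime]
    (n q : ℕ) (hn : 1 ≤ n) (hq : q = p ^ n)
    (frob : C →+* C) (hfrob : ∀ x : C, frob x = x ^ q)
    (f : PowerSeries C)
    (hf : Tendsto (fun i : ℕ => ‖coeff i f‖) atTop (nhds 0)) :
    (∃ g : PowerSeries C,
        Tendsto (fun i : ℕ => ‖coeff i g‖) atTop (nhds 0) ∧
        f = PowerSeries.map frob g - g) ∧
    (∃ g' : PowerSeries C,
        Tendsto (fun i : ℕ => ‖coeff i g'‖) atTop (nhds 0) ∧
        -- `τ_D (a, b) = (τa + f·τb, τb)` fixes `(g', 1)`, i.e. `e₂ + g' e₁` is invariant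
        (PowerSeries.map frob g' + f * PowerSeries.map frob 1,
          PowerSeries.map frob (1 : PowerSeries C)) = (g', (1 : PowerSeries C))) := by
  have := IsUltrametricDist.isUltrametricDist_of_forall_norm_add_le_max_norm hna
  have hq2 : 2 ≤ q := hq ▸ Nat.one_lt_pow (by omega) (Fact.out : p.Prime).one_lt
  refine ⟨exists_map_sub_self_eq hq2 frob hfrob hf, ?_⟩
  obtain ⟨g, hg, hfg⟩ := exists_map_sub_self_eq hq2 frob hfrob (f := -f) (by simpa using hf)
  refine ⟨g, hg, ?_⟩
  rw [map_one, mul_one, neg_eq_iff_eq_neg.1 hfg]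
  simp

/-- Let `C` be a complete algebraically closed non-archimedean field of
characteristic `p` and `q` a power of `p`.  For every `f` in the Tate algebra `C{t}`
there is `g ∈ C{t}` with `f = τ(g) − g` (where `τ` is the coefficientwise `q`-power
map).  Consequently, the rank-2 module `D = C{t}e₁ ⊕ C{t}e₂` with `τe₁ = e₁`,
`τe₂ = e₂ + f e₁` admits a `τ`-invariant element of the form `e₂ + g' e₁`:
every self-extension of the trivial module `(C{t}, τ)` splits. -/
theorem trivial_tate_extension_splits
    (C : Type*) [NontriviallyNormedField C] [CompleteSpace C] [IsAlgClosed C]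
    (hna : ∀ x y : C, ‖x + y‖ ≤ max ‖x‖ ‖y‖)
    (p : ℕ) [Fact p.Prime] [CharP C p]
    (n q : ℕ) (hn : 1 ≤ n) (hq : q = p ^ n)
    (frob : C →+* C) (hfrob : ∀ x : C, frob x = x ^ q)
    (f : PowerSeries C)
    (hf : Tendsto (fun i : ℕ => ‖coeff i f‖) atTop (nhds 0)) :
    (∃ g : PowerSeries C,
        Tendsto (fun i : ℕ => ‖coeff i g‖) atTop (nhds 0) ∧
        f = PowerSeries.map frob g - g) ∧
    (∃ g' : PowerSeries C,
        Tendsto (fun i : ℕ => ‖coeff i g'‖) atTop (nhds 0) ∧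
        -- `τ_D (a, b) = (τa + f·τb, τb)` fixes `(g', 1)`, i.e. `e₂ + g' e₁` is invariant
        (PowerSeries.map frob g' + f * PowerSeries.map frob 1,
          PowerSeries.map frob (1 : PowerSeries C)) = (g', (1 : PowerSeries C))) :=
  trivial_tate_extension_splits_general C hna p n q hn hq frob hfrob f hf
end
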